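/- arXiv:1906.00788 — 2 statements merged into one kernel-verified Lean document; each statement's English description precedes it below -/
import Mathlib

section
/- For all integers n, t^{-n} v_{3n} = t^{-n} v_n^3 - 3 v_n v_{-n} + 3. -/
/-!
Factor `X³ - r X² - s X - t = (X - a)(X - b)(X - c)`; since `abc = t ≠ 0` the roots are
nonzero, and `n ↦ aⁿ + bⁿ + cⁿ` satisfies the recurrence in both directions and has the
initial values of `v`, so it is `v`. With `x, y, z = aⁿ, bⁿ, cⁿ` we have `xyz = tⁿ`, and the
claim becomes the symmetric-function identity
`x³ + y³ + z³ = (x + y + z)³ - 3 (x + y + z)(xy + yz + zx) + 3xyz`.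
-/

open Polynomial in
lemma IsAlgClosed.exists_vieta_cubic {K : Type*} [Field K] [IsAlgClosed K] (r s t : K) :
    ∃ a b c : K, a + b + c = r ∧ a * b + a * c + b * c = -s ∧ a * b * c = t := by
  have hcubic : (X ^ 3 - C r * X ^ 2 - C s * X - C t).degree = 3 := by compute_degree!
  obtain ⟨a, ha⟩ := IsAlgClosed.exists_root _ (by rw [hcubic]; decide)
  -- the quotient of the cubic by `X - a`; its roots `b` and `r - a - b` are the other two
  have hquadratic : (X ^ 2 - C (r - a) * X + C (a ^ 2 - a * r - s)).degree = 2 := by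
    compute_degree!
  obtain ⟨b, hb⟩ := IsAlgClosed.exists_root _ (by rw [hquadratic]; decide)
  simp only [IsRoot, eval_sub, eval_add, eval_mul, eval_pow, eval_C, eval_X] at ha hb
  exact ⟨a, b, r - a - b, by ring, by linear_combination -hb, by linear_combination a * -hb + ha⟩

lemma zpow_eq_of_pow_three_eq {K : Type*} [Field K] {r s t x : K} (hx : x ≠ 0)
    (h : x ^ 3 = r * x ^ 2 + s * x + t) (m : ℤ) :
    x ^ m = r * x ^ (m - 1) + s * x ^ (m - 2) + t * x ^ (m - 3) := by
  have hpow (k : ℕ) : x ^ (m - 3 + k) = x ^ (m - 3) * x ^ k := by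
    rw [zpow_add₀ hx, zpow_natCast]
  have e0 := hpow 3
  have e1 := hpow 2
  have e2 := hpow 1
  push_cast at e0 e1 e2
  rw [show m - 3 + 3 = m by ring] at e0
  rw [show m - 3 + 2 = m - 1 by ring] at e1
  rw [show m - 3 + 1 = m - 2 by ring] at e2
  rw [e0, e1, e2, h]
  ring

lemma eq_zero_of_linearRecurrence {R : Type*} [CommRing R] [NoZeroDivisors R] {r s t : R}
    (ht : t ≠ 0) {d : ℤ → R} (hd : ∀ n, d n = r * d (n - 1) + s * d (n - 2) + t * d (n - 3))
    (h0 : d 0 = 0) (h1 : d 1 = 0) (h2 : d 2 = 0) (n : ℤ) : d n = 0 := by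
  suffices ∀ n : ℤ, d n = 0 ∧ d (n + 1) = 0 ∧ d (n + 2) = 0 from (this n).1
  intro n
  induction n using Int.induction_on with
  | zero => simpa using ⟨h0, h1, h2⟩
  | succ i ih =>
    obtain ⟨e0, e1, e2⟩ := ih
    have h3 := hd (i + 3)
    rw [show (i : ℤ) + 3 - 1 = i + 2 by ring, show (i : ℤ) + 3 - 2 = i + 1 by ring,
      show (i : ℤ) + 3 - 3 = i by ring, e0, e1, e2] at h3
    refine ⟨e1, by rwa [add_assoc], ?_⟩
    rw [add_assoc]
    simpa using h3
  | pred i ih =>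
    obtain ⟨e0, e1, e2⟩ := ih
    have h3 := hd (-i + 2)
    rw [show -(i : ℤ) + 2 - 1 = -i + 1 by ring, show -(i : ℤ) + 2 - 2 = -i by ring,
      show -(i : ℤ) + 2 - 3 = -i - 1 by ring, e0, e1, e2] at h3
    have : t * d (-i - 1) = 0 := by linear_combination -h3
    refine ⟨(mul_eq_zero.1 this).resolve_left ht, by rwa [sub_add_cancel], ?_⟩
    rwa [show -(i : ℤ) - 1 + 2 = -i + 1 by ring]

lemma eq_zpow_add_zpow_add_zpow {K : Type*} [Field K] {r s t : K} (ht : t ≠ 0) {v : ℤ → K}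
    (hv : ∀ n : ℤ, v n = r * v (n - 1) + s * v (n - 2) + t * v (n - 3))
    (hv0 : v 0 = 3) (hv1 : v 1 = r) (hv2 : v 2 = r ^ 2 + 2 * s) {a b c : K}
    (h1 : a + b + c = r) (h2 : a * b + a * c + b * c = -s) (h3 : a * b * c = t) (n : ℤ) :
    v n = a ^ n + b ^ n + c ^ n := by
  have habc : a * b * c ≠ 0 := h3 ▸ ht
  simp only [mul_ne_zero_iff] at habc
  obtain ⟨⟨ha0, hb0⟩, hc0⟩ := habc
  have ha := zpow_eq_of_pow_three_eq ha0
    (show a ^ 3 = r * a ^ 2 + s * a + t by linear_combination a ^ 2 * h1 - a * h2 + h3)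
  have hb := zpow_eq_of_pow_three_eq hb0
    (show b ^ 3 = r * b ^ 2 + s * b + t by linear_combination b ^ 2 * h1 - b * h2 + h3)
  have hc := zpow_eq_of_pow_three_eq hc0
    (show c ^ 3 = r * c ^ 2 + s * c + t by linear_combination c ^ 2 * h1 - c * h2 + h3)
  have hd := eq_zero_of_linearRecurrence (r := r) (s := s)
    (d := fun m ↦ v m - (a ^ m + b ^ m + c ^ m)) ht
    (fun m ↦ by linear_combination hv m - ha m - hb m - hc m)
    (by simp only [zpow_zero, hv0]; norm_num)
    (by simp only [zpow_one, hv1]; linear_combination -h1)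
    (by simp only [zpow_ofNat, hv2]; linear_combination (-(a + b + c) - r) * h1 + 2 * h2)
  exact sub_eq_zero.1 (hd n)

lemma inv_mul_add_pow_three_add_pow_three {K : Type*} [Field K] {x y z : K} (hx : x ≠ 0)
    (hy : y ≠ 0) (hz : z ≠ 0) :
    (x * y * z)⁻¹ * (x ^ 3 + y ^ 3 + z ^ 3) =
      (x * y * z)⁻¹ * (x + y + z) ^ 3 - 3 * (x + y + z) * (x⁻¹ + y⁻¹ + z⁻¹) + 3 := by
  field_simp
  ring

theorem stmt_12 (r s t : ℂ) (ht : t ≠ 0)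
    (v : ℤ → ℂ)
    (hv : ∀ n : ℤ, v n = r * v (n-1) + s * v (n-2) + t * v (n-3))
    (hv0 : v 0 = 3) (hv1 : v 1 = r) (hv2 : v 2 = r ^ 2 + 2 * s) :
    ∀ n : ℤ, t ^ (-n) * v (3 * n) = t ^ (-n) * v n ^ 3 - 3 * v n * v (-n) + 3 := by
  intro n
  obtain ⟨a, b, c, h1, h2, h3⟩ := IsAlgClosed.exists_vieta_cubic r s t
  have hv_eq := eq_zpow_add_zpow_add_zpow ht hv hv0 hv1 hv2 h1 h2 h3
  have habc : a * b * c ≠ 0 := h3 ▸ ht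
  simp only [mul_ne_zero_iff] at habc
  obtain ⟨⟨ha, hb⟩, hc⟩ := habc
  have hcube (x : ℂ) : x ^ (3 * n) = (x ^ n) ^ 3 := by
    rw [mul_comm, zpow_mul, zpow_ofNat]
  rw [hv_eq, hv_eq, hv_eq, ← h3, zpow_neg, mul_zpow, mul_zpow, hcube, hcube, hcube]
  simp only [zpow_neg]
  exact inv_mul_add_pow_three_add_pow_three (zpow_ne_zero n ha) (zpow_ne_zero n hb)
    (zpow_ne_zero n hc)
end

section
/- For all integers n, u_{-n} = (u_{2n} - u_n v_n) / t^n. -/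
/-!
With the companion matrix `C` of `x³ - r x² - s x - t`, every entry and the trace of `C ^ n` satisfy
the recurrence, so by uniqueness `u n = (C ^ n) 1 0` and `v n = tr (C ^ n)` for all `n : ℤ`; also
`det (C ^ n) = t ^ n`. For a 3×3 matrix `A`, Cayley–Hamilton gives `A² - tr A • A + e₂(A) • 1 = adj A`,
and reading the off-diagonal entry `(1, 0)` at `A = C ^ n`, where `adj A = t ^ n • C ^ (-n)`, yields
`u (2n) - v n * u n = t ^ n * u (-n)`.
-/

open Matrix

section ThirdOrderRecurrence

variable {K : Type*} [Field K]

def SatisfiesRec3 (r s t : K) (f : ℤ → K) : Prop :=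
  ∀ n : ℤ, f n = r * f (n - 1) + s * f (n - 2) + t * f (n - 3)

lemma SatisfiesRec3.sub {r s t : K} {f g : ℤ → K} (hf : SatisfiesRec3 r s t f)
    (hg : SatisfiesRec3 r s t g) : SatisfiesRec3 r s t (f - g) := fun n => by
  simp only [Pi.sub_apply, hf n, hg n]; ring

lemma SatisfiesRec3.eq_zero {r s t : K} (ht : t ≠ 0) {f : ℤ → K} (hf : SatisfiesRec3 r s t f)
    (h0 : f 0 = 0) (h1 : f 1 = 0) (h2 : f 2 = 0) : f = 0 := by
  suffices h : ∀ n : ℤ, f n = 0 ∧ f (n + 1) = 0 ∧ f (n + 2) = 0 from funext fun n => (h n).1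
  intro n
  induction n using Int.induction_on with
  | zero => simpa using ⟨h0, h1, h2⟩
  | succ n ih =>
    obtain ⟨a, b, c⟩ := ih
    have d := hf (n + 3)
    simp only [show (n : ℤ) + 3 - 1 = n + 2 by ring, show (n : ℤ) + 3 - 2 = n + 1 by ring,
      add_sub_cancel_right, a, b, c, mul_zero, add_zero] at d
    exact ⟨b, by rwa [add_assoc], by rwa [add_assoc]⟩
  | pred n ih =>
    obtain ⟨a, b, c⟩ := ih
    have d := hf (-n + 2)
    simp only [show -(n : ℤ) + 2 - 1 = -n + 1 by ring, show -(n : ℤ) + 2 - 3 = -n - 1 by ring,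
      add_sub_cancel_right, a, b, c, mul_zero, zero_add, zero_eq_mul, ht, false_or] at d
    exact ⟨d, by simpa using a, by rwa [show -(n : ℤ) - 1 + 2 = -n + 1 by ring]⟩

lemma SatisfiesRec3.ext {r s t : K} (ht : t ≠ 0) {f g : ℤ → K} (hf : SatisfiesRec3 r s t f)
    (hg : SatisfiesRec3 r s t g) (h0 : f 0 = g 0) (h1 : f 1 = g 1) (h2 : f 2 = g 2) :
    f = g :=
  sub_eq_zero.mp <| (hf.sub hg).eq_zero ht (sub_eq_zero.mpr h0) (sub_eq_zero.mpr h1)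
    (sub_eq_zero.mpr h2)

end ThirdOrderRecurrence

namespace Matrix

variable {n : Type*} [Fintype n] [DecidableEq n]

lemma det_zpow {K : Type*} [Field K] (A : Matrix n n K) (z : ℤ) : (A ^ z).det = A.det ^ z := by
  cases z with
  | ofNat k => simp [det_pow]
  | negSucc k => rw [zpow_negSucc, zpow_negSucc, det_nonsing_inv, Ring.inverse_eq_inv', det_pow]

lemma adjugate_eq_det_smul_inv {R : Type*} [CommRing R] (A : Matrix n n R) (h : IsUnit A.det) :
    A.adjugate = A.det • A⁻¹ := by
  rw [nonsing_inv_apply A h, smul_smul, IsUnit.mul_val_inv, one_smul]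

lemma mul_self_apply_sub_trace_mul_apply {R : Type*} [CommRing R]
    (A : Matrix (Fin 3) (Fin 3) R) {i j : Fin 3} (hij : i ≠ j) :
    (A * A) i j - A.trace * A i j = A.adjugate i j := by
  fin_cases i <;> fin_cases j <;> first
    | exact absurd rfl hij
    | simp [mul_apply, Fin.sum_univ_three, trace_fin_three, adjugate_fin_three]; ring

end Matrix

section Companion

variable {K : Type*} [Field K]

def companion3 (r s t : K) : Matrix (Fin 3) (Fin 3) K := !![r, s, t; 1, 0, 0; 0, 1, 0]

variable {r s t : K}

lemma det_companion3 : (companion3 r s t).det = t := by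
  simp [companion3, det_fin_three]

lemma isUnit_det_companion3 (ht : t ≠ 0) : IsUnit (companion3 r s t).det := by
  rw [det_companion3]; exact ht.isUnit

lemma companion3_pow_three :
    companion3 r s t ^ 3 = r • companion3 r s t ^ 2 + s • companion3 r s t + t • 1 := by
  ext i j
  fin_cases i <;> fin_cases j <;> simp [companion3, pow_succ, mul_apply, Fin.sum_univ_three] <;> ring

lemma companion3_zpow_eq (ht : t ≠ 0) (n : ℤ) :
    companion3 r s t ^ n = r • companion3 r s t ^ (n - 1)
      + s • companion3 r s t ^ (n - 2) + t • companion3 r s t ^ (n - 3) := by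
  have hU := isUnit_det_companion3 (r := r) (s := s) ht
  obtain ⟨m, rfl⟩ : ∃ m, n = m + 3 := ⟨n - 3, by ring⟩
  rw [show m + 3 - 1 = m + 2 by ring, show m + 3 - 2 = m + 1 by ring, add_sub_cancel_right]
  simp only [zpow_add hU, show (3 : ℤ) = (3 : ℕ) from rfl, show (2 : ℤ) = (2 : ℕ) from rfl,
    zpow_natCast, zpow_one, companion3_pow_three, mul_add, Matrix.mul_smul, mul_one]

lemma satisfiesRec3_companion3_zpow_apply (ht : t ≠ 0) (i j : Fin 3) :
    SatisfiesRec3 r s t fun n => (companion3 r s t ^ n) i j := fun n => by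
  simp [companion3_zpow_eq ht n]

lemma satisfiesRec3_trace_companion3_zpow (ht : t ≠ 0) :
    SatisfiesRec3 r s t fun n => (companion3 r s t ^ n).trace := fun n => by
  simp [companion3_zpow_eq ht n]

end Companion

theorem stmt_16 (r s t : ℂ) (ht : t ≠ 0)
    (u v : ℤ → ℂ)
    (hu : ∀ n : ℤ, u n = r * u (n-1) + s * u (n-2) + t * u (n-3))
    (hu0 : u 0 = 0) (hu1 : u 1 = 1) (hu2 : u 2 = r)
    (hv : ∀ n : ℤ, v n = r * v (n-1) + s * v (n-2) + t * v (n-3))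
    (hv0 : v 0 = 3) (hv1 : v 1 = r) (hv2 : v 2 = r ^ 2 + 2 * s) :
    ∀ n : ℤ, u (-n) = (u (2 * n) - u n * v n) / t ^ n := by
  intro n
  set C := companion3 r s t
  have hU : IsUnit C.det := isUnit_det_companion3 ht
  have hu_eq : u = fun k => (C ^ k) 1 0 :=
    SatisfiesRec3.ext ht hu (satisfiesRec3_companion3_zpow_apply ht 1 0)
      (by simp [hu0]) (by simp [C, companion3, hu1])
      (by simp [C, companion3, hu2, sq, mul_apply, Fin.sum_univ_three])
  have hv_eq : v = fun k => (C ^ k).trace :=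
    SatisfiesRec3.ext ht hv (satisfiesRec3_trace_companion3_zpow ht)
      (by simp [hv0]) (by simp [C, companion3, hv1])
      (by simp [C, companion3, hv2, sq, trace_fin_three]; ring)
  have key := (C ^ n).mul_self_apply_sub_trace_mul_apply (i := 1) (j := 0) (by decide)
  rw [adjugate_eq_det_smul_inv _ (hU.det_zpow n), ← zpow_neg hU, ← zpow_add hU, det_zpow,
    det_companion3] at key
  rw [hu_eq, hv_eq, eq_div_iff (zpow_ne_zero n ht), two_mul]
  simp only [Matrix.smul_apply, smul_eq_mul] at key
  linear_combination -key
end
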